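/- Let G be a chain-connected anterial graph over a finite node set V, and let i and j be nodes lying in distinct chain components of G such that i ∉ ant_G(j) and j ∉ ant_G(i). If there is a primitive inducing path between the nodes τ(i) and τ(j) in the collapsed graph G_col, then there is a primitive inducing path between i and j in G. -/

import Mathlib

open MeasureTheory

universe u v w

/-! ## Mixed graphs -/

/-- A mixed graph over a node set `V`: directed, undirected and bidirected edges.
The undirected and bidirected edge relations are read symmetrically. -/
structure MixedGraph (V : Type u) where
  dir : V → V → Prop
  undir : V → V → Prop
  bidir : V → V → Prop

namespace MixedGraph

variable {V : Type u} (G : MixedGraph V)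

/-- The (symmetrised) undirected-edge relation: there is an undirected edge between `a` and `b`. -/
def Undir (a b : V) : Prop := G.undir a b ∨ G.undir b a

/-- The (symmetrised) bidirected-edge relation. -/
def Bidir (a b : V) : Prop := G.bidir a b ∨ G.bidir b a

/-- Two nodes are adjacent if they are joined by an edge of any type. -/
def Adj (a b : V) : Prop := G.dir a b ∨ G.dir b a ∨ G.Undir a b ∨ G.Bidir a b

/-- One step of a semi-directed path: a directed edge `a → b` or an undirected edge. -/
def sdStep (a b : V) : Prop := G.dir a b ∨ G.Undir a b

/-- There is a semi-directed path (possibly trivial) from `a` to `b`. -/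
def SemiDirReach (a b : V) : Prop := Relation.ReflTransGen G.sdStep a b

/-- The anterior of a node set `S`. -/
def ant (S : Set V) : Set V := {x | x ∉ S ∧ ∃ i ∈ S, G.SemiDirReach x i}

/-- There is a semi-directed cycle in `G`. -/
def HasSemiDirCycle : Prop := ∃ a b, G.dir a b ∧ G.SemiDirReach b a

/-- A chain mixed graph: no semi-directed cycles. -/
def IsCMG : Prop := ¬ G.HasSemiDirCycle

/-- An anterial graph: a chain mixed graph in which no two nodes joined by a bidirected
edge are connected by a semi-directed path. -/
def IsAnterial : Prop := G.IsCMG ∧ ∀ a b, G.Bidir a b → ¬ G.SemiDirReach a b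

/-- The chain component of a node `i`: all nodes connected to `i` by a sequence of
undirected edges (including `i` itself). -/
def ChainComp (i : V) : Set V := {j | Relation.ReflTransGen G.Undir i j}

/-- Chain-connected: `i ↔ j` implies `i ↔ k` for every `k` in the chain component of `j`. -/
def ChainConnected : Prop := ∀ i j k : V, G.Bidir i j → k ∈ G.ChainComp j → G.Bidir i k

/-- The neighbours of a node. -/
def neSet (i : V) : Set V := {x | G.Undir x i}

/-- The parents of a node. -/
def paSet (i : V) : Set V := {x | G.dir x i}

lemma undir_symmetric : Symmetric G.Undir := fun _ _ h => h.elim Or.inr Or.inl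

end MixedGraph

/-- The kind of an edge traversed on a walk, relative to the direction of travel. -/
inductive EdgeKind : Type
  | dirR   -- directed edge pointing forwards
  | dirL   -- directed edge pointing backwards
  | undirE -- undirected edge
  | bidirE -- bidirected edge

/-- Whether an edge of the given kind joins `a` to `b` (in the direction of travel). -/
def MixedGraph.edgeHolds {V : Type u} (G : MixedGraph V) : EdgeKind → V → V → Prop
  | .dirR, a, b => G.dir a b
  | .dirL, a, b => G.dir b a
  | .undirE, a, b => G.Undir a b
  | .bidirE, a, b => G.Bidir a b

/-- A walk in a mixed graph: a sequence of nodes in which every pair of consecutive nodes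
is joined by an edge (nodes and edges may repeat). -/
structure GWalk {V : Type u} (G : MixedGraph V) where
  len : ℕ
  node : ℕ → V
  kind : ℕ → EdgeKind
  valid : ∀ k, k < len → G.edgeHolds (kind k) (node k) (node (k + 1))

namespace GWalk

variable {V : Type u} {G : MixedGraph V} (w : GWalk G)

/-- The nodes with indices in `[a, b]` form a section of the walk: a maximal subwalk
all of whose edges are undirected. -/
def IsSection (a b : ℕ) : Prop :=
  a ≤ b ∧ b ≤ w.len ∧ (∀ k, a ≤ k → k < b → w.kind k = EdgeKind.undirE) ∧
    (a = 0 ∨ w.kind (a - 1) ≠ EdgeKind.undirE) ∧ (b = w.len ∨ w.kind b ≠ EdgeKind.undirE)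

/-- A collider section: the two edges of the walk immediately adjacent to the section
both have an arrowhead at the section. -/
def IsColliderSection (a b : ℕ) : Prop :=
  w.IsSection a b ∧ 0 < a ∧ b < w.len ∧
    (w.kind (a - 1) = EdgeKind.dirR ∨ w.kind (a - 1) = EdgeKind.bidirE) ∧
    (w.kind b = EdgeKind.dirL ∨ w.kind b = EdgeKind.bidirE)

/-- The walk is connecting given `C`: every collider section contains a node of `C` and
every non-collider section contains no node of `C`. -/
def ConnectingGiven (C : Set V) : Prop :=
  ∀ a b : ℕ, w.IsSection a b →
    (w.IsColliderSection a b → ∃ m, a ≤ m ∧ m ≤ b ∧ w.node m ∈ C) ∧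
    (¬ w.IsColliderSection a b → ∀ m, a ≤ m → m ≤ b → w.node m ∉ C)

/-- A semi-directed walk: every edge is undirected or directed forwards. -/
def IsSemiDirected : Prop :=
  ∀ k, k < w.len → (w.kind k = EdgeKind.dirR ∨ w.kind k = EdgeKind.undirE)

end GWalk

/-- Graphical separation: `A ⊥_G B | C` holds if there is no connecting walk given `C`
between a node of `A` and a node of `B`. -/
def MixedGraph.Sep {V : Type u} (G : MixedGraph V) (A B C : Set V) : Prop :=
  ¬ ∃ w : GWalk G, w.node 0 ∈ A ∧ w.node w.len ∈ B ∧ w.ConnectingGiven C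

/-- A primitive inducing path between `i` and `j`. -/
def PrimitiveInducingPath {V : Type u} (G : MixedGraph V) (i j : V) : Prop :=
  ∃ w : GWalk G, 2 ≤ w.len ∧ w.node 0 = i ∧ w.node w.len = j ∧
    (∀ m, 0 < m → m < w.len → w.node m ∈ G.ant {i, j}) ∧
    (∀ k, 1 ≤ k → k + 1 < w.len → (w.kind k = EdgeKind.bidirE ∨ w.kind k = EdgeKind.undirE)) ∧
    (w.kind 0 = EdgeKind.bidirE ∨ w.kind 0 = EdgeKind.dirR) ∧
    (w.kind (w.len - 1) = EdgeKind.bidirE ∨ w.kind (w.len - 1) = EdgeKind.dirL)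

/-- A mixed graph is maximal if every pair of non-adjacent nodes can be separated by some set. -/
def IsMaximal {V : Type u} (G : MixedGraph V) : Prop :=
  ∀ i j : V, i ≠ j → ¬ G.Adj i j → ∃ C : Set V, i ∉ C ∧ j ∉ C ∧ G.Sep {i} {j} C

/-! ## Independence models -/

/-- Pairwise disjointness of three sets. -/
def Disjoint3 {V : Type u} (A B C : Set V) : Prop :=
  Disjoint A B ∧ Disjoint A C ∧ Disjoint B C

/-- A compositional graphoid: an independence model over `V` satisfying symmetry,
decomposition, weak union, contraction, intersection and composition. -/
structure IsCompositionalGraphoid {V : Type u} (J : Set V → Set V → Set V → Prop) : Prop where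
  symm : ∀ A B C : Set V, Disjoint3 A B C → J A B C → J B A C
  decomposition : ∀ A B C D : Set V, Disjoint3 A (B ∪ D) C → J A (B ∪ D) C → J A B C
  weakUnion : ∀ A B C D : Set V, Disjoint3 A (B ∪ D) C → J A (B ∪ D) C → J A B (C ∪ D)
  contraction : ∀ A B C D : Set V, Disjoint3 A B (C ∪ D) → Disjoint3 A D C →
    J A B (C ∪ D) → J A D C → J A (B ∪ D) C
  intersection : ∀ A B C D : Set V, Disjoint3 A B (C ∪ D) → Disjoint3 A D (C ∪ B) →
    J A B (C ∪ D) → J A D (C ∪ B) → J A (B ∪ D) C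
  composition : ∀ A B C D : Set V, Disjoint3 A B C → Disjoint3 A D C →
    J A B C → J A D C → J A (B ∪ D) C

/-- An independence model `J` is Markovian to a mixed graph `G` if every graphical
separation implies the corresponding independence statement. -/
def MarkovTo {V : Type u} (J : Set V → Set V → Set V → Prop) (G : MixedGraph V) : Prop :=
  ∀ A B C : Set V, Disjoint3 A B C → G.Sep A B C → J A B C

/-! ## The collapsed graph -/

/-- The equivalence relation "being in the same chain component". -/
def MixedGraph.undirSetoid {V : Type*} (G : MixedGraph V) : Setoid V where
  r a b := Relation.ReflTransGen G.Undir a b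
  iseqv := ⟨fun _ => Relation.ReflTransGen.refl,
    fun {a b} (h : Relation.ReflTransGen G.Undir a b) => show Relation.ReflTransGen G.Undir b a by
      induction h with
      | refl => exact Relation.ReflTransGen.refl
      | tail _ hbc ih => exact Relation.ReflTransGen.head (G.undir_symmetric hbc) ih,
    fun h h' => Relation.ReflTransGen.trans h h'⟩

/-- The nodes of the collapsed graph: the chain components of `G`. -/
def ColNode {V : Type*} (G : MixedGraph V) : Type _ := Quotient G.undirSetoid

/-- The collapsed graph `G_col` of a chain-connected anterial graph `G`: nodes are the
chain components of `G`, with `τ(i) → τ(j)` whenever `i' → j'` in `G` for some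
`i' ∈ τ(i)`, `j' ∈ τ(j)`, and `τ(i) ↔ τ(j)` whenever `i' ↔ j'` in `G` for some
`i' ∈ τ(i)`, `j' ∈ τ(j)`; it has no undirected edges. -/
def colGraph {V : Type*} (G : MixedGraph V) : MixedGraph (ColNode G) where
  dir x y := ∃ a b : V, Quotient.mk G.undirSetoid a = x ∧ Quotient.mk G.undirSetoid b = y ∧ G.dir a b
  undir _ _ := False
  bidir x y := ∃ a b : V, Quotient.mk G.undirSetoid a = x ∧ Quotient.mk G.undirSetoid b = y ∧ G.Bidir a b

/-!
Semi-directed reachability in `G_col` lifts to arbitrary representatives, so `G_col` has no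
semi-directed cycles and anteriority in `G_col` implies anteriority in `G`. A primitive inducing
path between `τ(i)` and `τ(j)` therefore has no directed end edge (an edge `τ(i) → q₁`, with `q₁`
anterior to `{τ(i), τ(j)}`, would make `τ(i)` anterior to `τ(j)`), and no undirected inner edge
(`G_col` has none): it is bidirected throughout. By chain-connectedness, `τ(a) ↔ τ(b)` gives
`a' ↔ b'` for all representatives, so `i`, `j` and any representatives of the inner components
form the required path in `G`.
-/

namespace MixedGraph

variable {V : Type*} {G : MixedGraph V}

lemma bidir_comm {a b : V} : G.Bidir a b ↔ G.Bidir b a := Or.comm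

lemma IsCMG.mem_ant_of_dir (hG : G.IsCMG) {x y z : V} (hxz : G.dir x z)
    (hz : z ∈ G.ant {x, y}) : x ∈ G.ant {y} := by
  obtain ⟨-, t, ht, hzt⟩ := hz
  have hxt : G.SemiDirReach x t := .head (Or.inl hxz) hzt
  rcases ht with rfl | rfl
  · exact absurd ⟨t, z, hxz, hzt⟩ hG
  · refine ⟨fun hxy => hG ⟨x, z, hxz, ?_⟩, t, rfl, hxt⟩
    rwa [← Set.mem_singleton_iff.1 hxy] at hzt

end MixedGraph

namespace GWalk

variable {V : Type*} {G : MixedGraph V}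

structure IsPrimitiveInducing (w : GWalk G) (i j : V) : Prop where
  two_le_len : 2 ≤ w.len
  node_zero : w.node 0 = i
  node_len : w.node w.len = j
  mem_ant : ∀ m, 0 < m → m < w.len → w.node m ∈ G.ant {i, j}
  kind_inner : ∀ k, 1 ≤ k → k + 1 < w.len →
    (w.kind k = EdgeKind.bidirE ∨ w.kind k = EdgeKind.undirE)
  kind_first : w.kind 0 = EdgeKind.bidirE ∨ w.kind 0 = EdgeKind.dirR
  kind_last : w.kind (w.len - 1) = EdgeKind.bidirE ∨ w.kind (w.len - 1) = EdgeKind.dirL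

lemma _root_.primitiveInducingPath_iff {i j : V} :
    PrimitiveInducingPath G i j ↔ ∃ w : GWalk G, w.IsPrimitiveInducing i j :=
  ⟨fun ⟨w, h₁, h₂, h₃, h₄, h₅, h₆, h₇⟩ => ⟨w, ⟨h₁, h₂, h₃, h₄, h₅, h₆, h₇⟩⟩,
    fun ⟨w, ⟨h₁, h₂, h₃, h₄, h₅, h₆, h₇⟩⟩ => ⟨w, h₁, h₂, h₃, h₄, h₅, h₆, h₇⟩⟩

lemma IsPrimitiveInducing.kind_eq_bidirE {w : GWalk G} {i j : V}
    (hw : w.IsPrimitiveInducing i j) (hG : G.IsCMG) (hundir : ∀ a b, ¬ G.Undir a b)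
    (hi : i ∉ G.ant {j}) (hj : j ∉ G.ant {i})
    (k : ℕ) (hk : k < w.len) : w.kind k = EdgeKind.bidirE := by
  have hlen := hw.two_le_len
  by_cases hk0 : k = 0
  · subst hk0
    refine hw.kind_first.resolve_right fun hdir =>
      hi (hG.mem_ant_of_dir ?_ (hw.mem_ant 1 one_pos hlen))
    simpa [MixedGraph.edgeHolds, hdir, hw.node_zero] using w.valid 0 hk
  by_cases hkn : k = w.len - 1
  · subst hkn
    refine hw.kind_last.resolve_right fun hdir =>
      hj (hG.mem_ant_of_dir (z := w.node (w.len - 1)) ?_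
        (Set.pair_comm i j ▸ hw.mem_ant _ (by omega) (by omega)))
    have hvalid := w.valid (w.len - 1) hk
    rwa [hdir, Nat.sub_add_cancel (by omega), hw.node_len] at hvalid
  · refine (hw.kind_inner k (by omega) (by omega)).resolve_right fun hu =>
      hundir (w.node k) (w.node (k + 1)) ?_
    simpa [MixedGraph.edgeHolds, hu] using w.valid k hk

end GWalk

section colGraph

variable {V : Type*} {G : MixedGraph V}

lemma colGraph_not_undir (x y : ColNode G) : ¬ (colGraph G).Undir x y := by
  rintro (h | h) <;> exact h

lemma semiDirReach_of_mk_eq {a b : V}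
    (h : Quotient.mk G.undirSetoid a = Quotient.mk G.undirSetoid b) : G.SemiDirReach a b :=
  Relation.ReflTransGen.mono (fun _ _ => Or.inr) _ _ (Quotient.exact h)

lemma semiDirReach_of_colGraph {a b : V}
    (h : (colGraph G).SemiDirReach (Quotient.mk _ a) (Quotient.mk _ b)) : G.SemiDirReach a b := by
  generalize hy : Quotient.mk G.undirSetoid b = y at h
  induction h generalizing b with
  | refl => exact semiDirReach_of_mk_eq hy.symm
  | tail _ hstep ih =>
    rcases hstep with ⟨a', b', ha', hb', hdir⟩ | hundir
    · exact ((ih ha').tail (Or.inl hdir)).trans (semiDirReach_of_mk_eq (hb'.trans hy.symm))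
    · exact (colGraph_not_undir _ _ hundir).elim

lemma bidir_of_colGraph (hcc : G.ChainConnected) {a b : V}
    (h : (colGraph G).Bidir (Quotient.mk _ a) (Quotient.mk _ b)) : G.Bidir a b := by
  wlog hab : (colGraph G).bidir (Quotient.mk _ a) (Quotient.mk _ b) generalizing a b
  · exact MixedGraph.bidir_comm.1 (this h.symm (h.resolve_left hab))
  obtain ⟨a', b', ha', hb', hbid⟩ := hab
  have hab' : G.Bidir a' b := hcc a' b' b hbid (Quotient.exact hb')
  exact MixedGraph.bidir_comm.1 (hcc b a' a (MixedGraph.bidir_comm.1 hab') (Quotient.exact ha'))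

lemma MixedGraph.IsCMG.colGraph (hG : G.IsCMG) : (colGraph G).IsCMG := by
  rintro ⟨-, -, ⟨a, b, rfl, rfl, hab⟩, hba⟩
  exact hG ⟨a, b, hab, semiDirReach_of_colGraph hba⟩

lemma mem_ant_of_colGraph {a : V} {S : Set V}
    (h : Quotient.mk _ a ∈ (colGraph G).ant (Quotient.mk G.undirSetoid '' S)) :
    a ∈ G.ant S := by
  obtain ⟨ha, -, ⟨s, hs, rfl⟩, has⟩ := h
  exact ⟨fun has' => ha ⟨a, has', rfl⟩, s, hs, semiDirReach_of_colGraph has⟩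

lemma mk_notMem_colGraph_ant {a b : V} (h : a ∉ G.ant {b}) :
    Quotient.mk _ a ∉ (colGraph G).ant {Quotient.mk G.undirSetoid b} := fun hab =>
  h (mem_ant_of_colGraph ((Set.image_singleton (f := Quotient.mk G.undirSetoid)).symm ▸ hab))

lemma primitiveInducingPath_of_colGraph (hcc : G.ChainConnected) {w : GWalk (colGraph G)}
    {i j : V} (hw : w.IsPrimitiveInducing (Quotient.mk _ i) (Quotient.mk _ j))
    (hbid : ∀ k < w.len, w.kind k = EdgeKind.bidirE) : PrimitiveInducingPath G i j := by
  let rep : ℕ → V := fun m => if m = 0 then i else if m < w.len then (w.node m).out else j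
  have mk_rep : ∀ m ≤ w.len, Quotient.mk _ (rep m) = w.node m := by
    intro m hm
    simp only [rep]
    split_ifs with h0 hlt
    · rw [h0, hw.node_zero]
    · exact Quotient.out_eq _
    · rw [show m = w.len by omega, hw.node_len]
  have hlen := hw.two_le_len
  refine primitiveInducingPath_iff.2
    ⟨⟨w.len, rep, fun _ => EdgeKind.bidirE, fun k hk => bidir_of_colGraph hcc ?valid⟩,
      hlen, rfl, ?last, fun m hm0 hm => mem_ant_of_colGraph ?ant,
      fun _ _ _ => Or.inl rfl, Or.inl rfl, Or.inl rfl⟩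
  case valid =>
    rw [mk_rep k hk.le, mk_rep (k + 1) hk]
    simpa [MixedGraph.edgeHolds, hbid k hk] using w.valid k hk
  case last => simp only [rep, if_neg (show w.len ≠ 0 by omega), lt_irrefl, if_false]
  case ant =>
    rw [mk_rep m hm.le]
    exact (Set.image_pair (Quotient.mk G.undirSetoid) i j).symm ▸ hw.mem_ant m hm0 hm

end colGraph

theorem statement_12_general {V : Type*} (G : MixedGraph V)
    (hant : G.IsAnterial) (hcc : G.ChainConnected)
    (i j : V)
    (hi : i ∉ G.ant {j}) (hj : j ∉ G.ant {i})
    (hpip : PrimitiveInducingPath (colGraph G)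
      (Quotient.mk G.undirSetoid i) (Quotient.mk G.undirSetoid j)) :
    PrimitiveInducingPath G i j := by
  obtain ⟨w, hw⟩ := primitiveInducingPath_iff.1 hpip
  exact primitiveInducingPath_of_colGraph hcc hw <|
    hw.kind_eq_bidirE hant.1.colGraph colGraph_not_undir
      (mk_notMem_colGraph_ant hi) (mk_notMem_colGraph_ant hj)

/-- Let `G` be a chain-connected anterial graph and let `i`, `j` lie in distinct chain
components of `G` with `i ∉ ant_G(j)` and `j ∉ ant_G(i)`. If there is a primitive
inducing path between `τ(i)` and `τ(j)` in the collapsed graph `G_col`, then there is a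
primitive inducing path between `i` and `j` in `G`. -/
theorem statement_12 {V : Type*} [Fintype V] (G : MixedGraph V)
    (hant : G.IsAnterial) (hcc : G.ChainConnected)
    (i j : V) (hij : j ∉ G.ChainComp i)
    (hi : i ∉ G.ant {j}) (hj : j ∉ G.ant {i})
    (hpip : PrimitiveInducingPath (colGraph G)
      (Quotient.mk G.undirSetoid i) (Quotient.mk G.undirSetoid j)) :
    PrimitiveInducingPath G i j :=
  statement_12_general G hant hcc i j hi hj hpip
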